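/- Global existence and uniqueness: for every initial condition x⁰ ∈ [0,∞)⁵ there exists a unique solution x : [0,∞) → ℝ⁵ of the diauxic-growth ODE x' = F(x) with x(0) = x⁰, and it takes values in the compact set {y ∈ [0,∞)⁵ : M(y) = M(x⁰)}, where M(n1,n2,r1,r2,a) = n1 + n2 + V·[q1(1+θ1 q3) r1 + q2(1+θ2 q3) r2 + q3 a]. -/

import Mathlib

open Set
open scoped NNReal
set_option maxHeartbeats 1000000
set_option linter.unusedSectionVars false
set_option linter.unusedVariables false

noncomputable def mu (m κ lam r a : ℝ) : ℝ := m * (r / (κ + r)) * (lam / (lam + a))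

noncomputable def mu3 (m3 κ3 lam a : ℝ) : ℝ := m3 * (a / (κ3 + a)) * (lam / (lam + a))

noncomputable def eta1 (e1 k1 ki r1 r2 : ℝ) : ℝ := e1 * (r2 / (k1 + r2)) * (ki / (ki + r1))

noncomputable def eta2 (e2 k2 r1 : ℝ) : ℝ := e2 * (r1 / (k2 + r1))

/-- Division rate `b_j = μ_j + μ3`. -/
noncomputable def bdiv (m κ m3 κ3 lam r a : ℝ) : ℝ := mu m κ lam r a + mu3 m3 κ3 lam a

/-- The diauxic-growth vector field `F` on `ℝ⁵`, with coordinates `(n1, n2, r1, r2, a)`. -/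
noncomputable def F (m1 m2 m3 κ1 κ2 κ3 lam e1 e2 k1 k2 ki q1 q2 q3 θ1 θ2 V : ℝ)
    (x : Fin 5 → ℝ) : Fin 5 → ℝ :=
  ![ (bdiv m1 κ1 m3 κ3 lam (x 2) (x 4) - eta1 e1 k1 ki (x 2) (x 3)) * x 0
       + eta2 e2 k2 (x 2) * x 1,
     (bdiv m2 κ2 m3 κ3 lam (x 3) (x 4) - eta2 e2 k2 (x 2)) * x 1
       + eta1 e1 k1 ki (x 2) (x 3) * x 0,
     -(mu m1 κ1 lam (x 2) (x 4) * x 0) / (q1 * V),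
     -(mu m2 κ2 lam (x 3) (x 4) * x 1) / (q2 * V),
     -(mu3 m3 κ3 lam (x 4) * (x 0 + x 1)) / (q3 * V)
       + (θ1 * mu m1 κ1 lam (x 2) (x 4) * x 0 + θ2 * mu m2 κ2 lam (x 3) (x 4) * x 1) / V ]

/-- The open set `U` on which `F` is locally Lipschitz. -/
def U (κ1 κ2 κ3 lam k1 k2 ki : ℝ) : Set (Fin 5 → ℝ) :=
  {x : Fin 5 → ℝ | -min (min κ1 ki) k2 < x 2 ∧ -min κ2 k1 < x 3 ∧ -min κ3 lam < x 4}

/-- Conserved quantity `M(n1,n2,r1,r2,a) = n1 + n2 + V[q1(1+θ1q3)r1 + q2(1+θ2q3)r2 + q3 a]`. -/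
noncomputable def Mfun (q1 q2 q3 θ1 θ2 V : ℝ) (y : Fin 5 → ℝ) : ℝ :=
  y 0 + y 1 + V * (q1 * (1 + θ1 * q3) * y 2 + q2 * (1 + θ2 * q3) * y 3 + q3 * y 4)



section Generic
variable {E : Type*} [NormedAddCommGroup E] [NormedSpace ℝ E]

/-- Continuity on subsets of `Ici 0` from right-derivatives within `Ici 0`. -/
lemma contOn_of_rightDeriv {x : ℝ → E} {d : ℝ → E}
    (h : ∀ t ∈ Ici (0:ℝ), HasDerivWithinAt x (d t) (Ici 0) t)
    {s : Set ℝ} (hs : s ⊆ Ici 0) : ContinuousOn x s :=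
  fun t ht => ((h t (hs ht)).continuousWithinAt).mono hs

/-- A scalar function with right-derivatives that are nonnegative whenever the function is
nonpositive stays nonnegative. -/
lemma nonneg_of_rightDeriv (f d : ℝ → ℝ)
    (hf : ∀ t ∈ Ici (0:ℝ), HasDerivWithinAt f (d t) (Ici 0) t)
    (h0 : 0 ≤ f 0)
    (hd : ∀ t ∈ Ici (0:ℝ), f t ≤ 0 → 0 ≤ d t) :
    ∀ t ∈ Ici (0:ℝ), 0 ≤ f t := by
  intro t1 ht1
  by_contra hneg
  push_neg at hneg
  have hcont : ContinuousOn f (Icc 0 t1) := contOn_of_rightDeriv hf (fun u hu => hu.1)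
  have ht1pos : 0 < t1 := by
    rcases eq_or_lt_of_le (mem_Ici.mp ht1) with h | h
    · exfalso; rw [← h] at hneg; linarith
    · exact h
  set S := Icc (0:ℝ) t1 ∩ f ⁻¹' (Ici 0) with hSdef
  have hS0 : (0:ℝ) ∈ S := ⟨⟨le_rfl, ht1pos.le⟩, h0⟩
  have hSb : BddAbove S := ⟨t1, fun u hu => hu.1.2⟩
  have hSc : IsClosed S := hcont.preimage_isClosed_of_isClosed isClosed_Icc isClosed_Ici
  have ht0mem : sSup S ∈ S := hSc.csSup_mem ⟨0, hS0⟩ hSb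
  set t0 := sSup S with ht0def
  have ht00 : 0 ≤ t0 := ht0mem.1.1
  have ht0le : t0 ≤ t1 := ht0mem.1.2
  have hft0 : 0 ≤ f t0 := ht0mem.2
  have ht0lt : t0 < t1 := by
    rcases eq_or_lt_of_le ht0le with h | h
    · exfalso; rw [h] at hft0; linarith
    · exact h
  have hltneg : ∀ s ∈ Ioc t0 t1, f s < 0 := by
    intro s hs
    by_contra h
    push_neg at h
    have hsS : s ∈ S := ⟨⟨le_trans ht00 hs.1.le, hs.2⟩, h⟩
    exact absurd (le_csSup hSb hsS) (not_le.mpr hs.1)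
  have hmono : MonotoneOn f (Icc t0 t1) := by
    apply monotoneOn_of_deriv_nonneg (convex_Icc _ _)
    · exact hcont.mono (Icc_subset_Icc ht00 le_rfl)
    · rw [interior_Icc]
      intro s hs
      have hs0 : 0 < s := lt_of_le_of_lt ht00 hs.1
      have := (hf s hs0.le).hasDerivAt (Ici_mem_nhds hs0)
      exact this.differentiableAt.differentiableWithinAt
    · rw [interior_Icc]
      intro s hs
      have hs0 : 0 < s := lt_of_le_of_lt ht00 hs.1
      have hda := (hf s hs0.le).hasDerivAt (Ici_mem_nhds hs0)
      rw [hda.deriv]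
      exact hd s hs0.le (hltneg s ⟨hs.1, hs.2.le⟩).le
  have := hmono (left_mem_Icc.mpr ht0le) (right_mem_Icc.mpr ht0le) ht0le
  linarith

/-- A scalar function with zero right-derivative on `Ici 0` is constant there. -/
lemma const_of_rightDeriv_zero (f d : ℝ → ℝ)
    (hf : ∀ t ∈ Ici (0:ℝ), HasDerivWithinAt f (d t) (Ici 0) t)
    (hd : ∀ t ∈ Ici (0:ℝ), d t = 0) :
    ∀ t ∈ Ici (0:ℝ), f t = f 0 := by
  intro t ht
  have hcont : ContinuousOn f (Icc 0 t) := contOn_of_rightDeriv hf (fun u hu => hu.1)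
  have hderiv : ∀ s ∈ Ico (0:ℝ) t, HasDerivWithinAt f 0 (Ici s) s := by
    intro s hs
    have := (hf s hs.1).mono (Ici_subset_Ici.mpr hs.1)
    rwa [hd s hs.1] at this
  exact constant_of_has_deriv_right_zero hcont hderiv t (mem_Icc.mpr ⟨ht, le_rfl⟩)

/-- Uniqueness of solutions on `Ici 0` for a globally Lipschitz autonomous field. -/
lemma uniq_on_Ici {G : E → E} {L : ℝ≥0} (hG : LipschitzWith L G) {x y : ℝ → E}
    (hx : ∀ t ∈ Ici (0:ℝ), HasDerivWithinAt x (G (x t)) (Ici 0) t)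
    (hy : ∀ t ∈ Ici (0:ℝ), HasDerivWithinAt y (G (y t)) (Ici 0) t)
    (h0 : x 0 = y 0) : ∀ t ∈ Ici (0:ℝ), x t = y t := by
  intro t ht
  have hx' : ∀ s ∈ Ico (0:ℝ) t, HasDerivWithinAt x (G (x s)) (Ici s) s :=
    fun s hs => (hx s hs.1).mono (Ici_subset_Ici.mpr hs.1)
  have hy' : ∀ s ∈ Ico (0:ℝ) t, HasDerivWithinAt y (G (y s)) (Ici s) s :=
    fun s hs => (hy s hs.1).mono (Ici_subset_Ici.mpr hs.1)
  exact ODE_solution_unique_of_mem_Icc_right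
    (v := fun _ => G) (s := fun _ => univ) (K := L)
    (fun _ _ => hG.lipschitzOnWith)
    (contOn_of_rightDeriv hx (fun u hu => hu.1)) hx' (fun _ _ => mem_univ _)
    (contOn_of_rightDeriv hy (fun u hu => hu.1)) hy' (fun _ _ => mem_univ _)
    h0 (mem_Icc.mpr ⟨ht, le_rfl⟩)

end Generic


section Glue
variable {E : Type*} [NormedAddCommGroup E] [NormedSpace ℝ E] [CompleteSpace E]

lemma deriv_Icc_to_Ici' {f : ℝ → E} {d : E} {n t : ℝ}
    (h : HasDerivWithinAt f d (Icc 0 n) t) (ht0 : 0 ≤ t) (htn : t < n) :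
    HasDerivWithinAt f d (Ici 0) t := by
  apply h.mono_of_mem_nhdsWithin
  apply mem_nhdsWithin.mpr
  exact ⟨Iio n, isOpen_Iio, htn, fun u hu => ⟨hu.2, hu.1.le⟩⟩

lemma deriv_Icc_to_Ici {f : ℝ → E} {d : E} {n t : ℝ}
    (h : HasDerivWithinAt f d (Icc 0 n) t) (ht0 : 0 ≤ t) (htn : t < n) :
    HasDerivWithinAt f d (Ici t) t := by
  apply h.mono_of_mem_nhdsWithin
  apply mem_nhdsWithin.mpr
  exact ⟨Iio n, isOpen_Iio, htn, fun u hu => ⟨le_trans ht0 hu.2, hu.1.le⟩⟩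

/-- Global existence on `Ici 0` for a bounded globally Lipschitz autonomous field. -/
lemma global_exists {G : E → E} {L : ℝ≥0} {C : ℝ}
    (hG : LipschitzWith L G) (hC : ∀ y, ‖G y‖ ≤ C) (x0 : E) :
    ∃ x : ℝ → E, x 0 = x0 ∧ ∀ t ∈ Ici (0:ℝ), HasDerivWithinAt x (G (x t)) (Ici 0) t := by
  have hC0 : 0 ≤ C := le_trans (norm_nonneg _) (hC x0)
  have key : ∀ n : ℕ, ∃ f : ℝ → E, f 0 = x0 ∧
      ∀ t ∈ Icc (0:ℝ) (n+1), HasDerivWithinAt f (G (f t)) (Icc (0:ℝ) (n+1)) t := by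
    intro n
    have hpl : IsPicardLindelof (fun _ y => G y) (tmin := 0) (tmax := n+1)
        ⟨0, le_rfl, by positivity⟩ x0 ⟨C*(n+1), by positivity⟩ 0 ⟨C, hC0⟩ L := by
      refine ⟨fun t _ => hG.lipschitzOnWith,
        fun y _ => continuousOn_const, fun t _ y _ => hC y, ?_⟩
      have h : max ((n:ℝ)+1-0) (0-0) = (n:ℝ)+1 := by
        rw [sub_zero, sub_zero, max_eq_left (by positivity)]
      show C * max ((n:ℝ)+1-0) (0-0) ≤ C*((n:ℝ)+1) - 0
      rw [h, sub_zero]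
    exact hpl.exists_eq_forall_mem_Icc_hasDerivWithinAt₀
  choose f hf0 hf using key
  have hcons : ∀ n m : ℕ, ∀ t, t ∈ Icc (0:ℝ) (n+1) → t ∈ Icc (0:ℝ) (m+1) → f n t = f m t := by
    intro n m t htn htm
    set b := min ((n:ℝ)+1) ((m:ℝ)+1) with hb
    have hbn : b ≤ (n:ℝ)+1 := min_le_left _ _
    have hbm : b ≤ (m:ℝ)+1 := min_le_right _ _
    have htb : t ∈ Icc (0:ℝ) b := ⟨htn.1, le_min htn.2 htm.2⟩
    refine ODE_solution_unique_of_mem_Icc_right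
      (v := fun _ => G) (s := fun _ => univ) (K := L) (a := 0) (b := b)
      (fun _ _ => hG.lipschitzOnWith)
      ((fun s hs => ((hf n s ⟨hs.1, le_trans hs.2 hbn⟩).continuousWithinAt).mono
        (Icc_subset_Icc le_rfl hbn)))
      (fun s hs => deriv_Icc_to_Ici (hf n s ⟨hs.1, (lt_of_lt_of_le hs.2 hbn).le⟩) hs.1
        (lt_of_lt_of_le hs.2 hbn))
      (fun _ _ => mem_univ _)
      ((fun s hs => ((hf m s ⟨hs.1, le_trans hs.2 hbm⟩).continuousWithinAt).mono
        (Icc_subset_Icc le_rfl hbm)))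
      (fun s hs => deriv_Icc_to_Ici (hf m s ⟨hs.1, (lt_of_lt_of_le hs.2 hbm).le⟩) hs.1
        (lt_of_lt_of_le hs.2 hbm))
      (fun _ _ => mem_univ _)
      (by rw [hf0 n, hf0 m]) htb
  refine ⟨fun t => f ⌊t⌋₊ t, by simpa using hf0 0, ?_⟩
  intro t ht
  set n := ⌊t⌋₊ with hn
  have htn : t < (n:ℝ) + 1 := Nat.lt_floor_add_one t
  have htmem : t ∈ Icc (0:ℝ) (n+1) := ⟨ht, htn.le⟩
  have h1 : HasDerivWithinAt (f n) (G (f n t)) (Ici 0) t :=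
    deriv_Icc_to_Ici' (hf n t htmem) ht htn
  have hset : Ici (0:ℝ) ∩ Iio ((n:ℝ)+1) ∈ nhdsWithin t (Ici (0:ℝ)) :=
    Filter.inter_mem self_mem_nhdsWithin (mem_nhdsWithin_of_mem_nhds (Iio_mem_nhds htn))
  have heq : ∀ u ∈ Ici (0:ℝ) ∩ Iio ((n:ℝ)+1), f ⌊u⌋₊ u = f n u := by
    intro u hu
    exact hcons _ _ u ⟨hu.1, (Nat.lt_floor_add_one u).le⟩ ⟨hu.1, hu.2.le⟩
  have hxt : f ⌊t⌋₊ t = f n t := rfl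
  exact h1.congr_of_eventuallyEq (Filter.eventuallyEq_of_mem hset heq) hxt
end Glue

lemma mu_nonneg {m κ lam r a : ℝ} (hm : 0 ≤ m) (hκ : 0 < κ) (hlam : 0 < lam)
    (hr : 0 ≤ r) (ha : 0 ≤ a) : 0 ≤ mu m κ lam r a :=
  mul_nonneg (mul_nonneg hm (div_nonneg hr (by linarith))) (div_nonneg hlam.le (by linarith))

lemma eta1_nonneg {e1 k1 ki r1 r2 : ℝ} (he : 0 ≤ e1) (hk : 0 < k1) (hki : 0 < ki)
    (hr1 : 0 ≤ r1) (hr2 : 0 ≤ r2) : 0 ≤ eta1 e1 k1 ki r1 r2 :=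
  mul_nonneg (mul_nonneg he (div_nonneg hr2 (by linarith))) (div_nonneg hki.le (by linarith))

lemma eta2_nonneg {e2 k2 r1 : ℝ} (he : 0 ≤ e2) (hk : 0 < k2) (hr1 : 0 ≤ r1) :
    0 ≤ eta2 e2 k2 r1 :=
  mul_nonneg he (div_nonneg hr1 (by linarith))

@[simp] lemma mu_zero (m κ lam a : ℝ) : mu m κ lam 0 a = 0 := by simp [mu]
@[simp] lemma mu3_zero (m3 κ3 lam : ℝ) : mu3 m3 κ3 lam 0 = 0 := by simp [mu3]
@[simp] lemma eta2_zero (e2 k2 : ℝ) : eta2 e2 k2 0 = 0 := by simp [eta2]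

/-- The conservation identity: the `M`-weighted combination of the components of `F`
vanishes identically. -/
lemma Mcomb (m1 m2 m3 κ1 κ2 κ3 lam e1 e2 k1 k2 ki q1 q2 q3 θ1 θ2 V : ℝ)
    (hq1 : q1 ≠ 0) (hq2 : q2 ≠ 0) (hq3 : q3 ≠ 0) (hV : V ≠ 0) (p : Fin 5 → ℝ) :
    F m1 m2 m3 κ1 κ2 κ3 lam e1 e2 k1 k2 ki q1 q2 q3 θ1 θ2 V p 0
      + F m1 m2 m3 κ1 κ2 κ3 lam e1 e2 k1 k2 ki q1 q2 q3 θ1 θ2 V p 1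
      + V * (q1 * (1 + θ1 * q3) * F m1 m2 m3 κ1 κ2 κ3 lam e1 e2 k1 k2 ki q1 q2 q3 θ1 θ2 V p 2
          + q2 * (1 + θ2 * q3) * F m1 m2 m3 κ1 κ2 κ3 lam e1 e2 k1 k2 ki q1 q2 q3 θ1 θ2 V p 3
          + q3 * F m1 m2 m3 κ1 κ2 κ3 lam e1 e2 k1 k2 ki q1 q2 q3 θ1 θ2 V p 4) = 0 := by
  simp only [F, bdiv, Matrix.cons_val_zero, Matrix.cons_val_one, Matrix.head_cons,
    Matrix.cons_val_two, Matrix.tail_cons, Matrix.cons_val_three, Matrix.cons_val_four,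
    Matrix.head_fin_const]
  field_simp
  ring

lemma isOpen_U (κ1 κ2 κ3 lam k1 k2 ki : ℝ) : IsOpen (U κ1 κ2 κ3 lam k1 k2 ki) := by
  unfold U
  exact (isOpen_lt continuous_const (continuous_apply 2)).inter
    ((isOpen_lt continuous_const (continuous_apply 3)).inter
      (isOpen_lt continuous_const (continuous_apply 4)))

lemma contDiffOn_F (m1 m2 m3 κ1 κ2 κ3 lam e1 e2 k1 k2 ki q1 q2 q3 θ1 θ2 V : ℝ)
    (hκ1 : 0 < κ1) (hκ2 : 0 < κ2) (hκ3 : 0 < κ3) (hlam : 0 < lam)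
    (hk1 : 0 < k1) (hk2 : 0 < k2) (hki : 0 < ki) :
    ContDiffOn ℝ 1 (F m1 m2 m3 κ1 κ2 κ3 lam e1 e2 k1 k2 ki q1 q2 q3 θ1 θ2 V)
      (U κ1 κ2 κ3 lam k1 k2 ki) := by
  set Us := U κ1 κ2 κ3 lam k1 k2 ki with hUs
  have hproj : ∀ i : Fin 5, ContDiffOn ℝ 1 (fun x : Fin 5 → ℝ => x i) Us :=
    fun i => (ContinuousLinearMap.proj (R := ℝ) (φ := fun _ : Fin 5 => ℝ) i).contDiff.contDiffOn
  have hx2 : ∀ x ∈ Us, -min (min κ1 ki) k2 < x 2 := fun x hx => hx.1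
  have hx3 : ∀ x ∈ Us, -min κ2 k1 < x 3 := fun x hx => hx.2.1
  have hx4 : ∀ x ∈ Us, -min κ3 lam < x 4 := fun x hx => hx.2.2
  have hd1 : ∀ x ∈ Us, κ1 + x 2 ≠ 0 := by
    intro x hx; have := hx2 x hx
    have h := min_le_left (min κ1 ki) k2; have h2 := min_le_left κ1 ki; nlinarith [this]
  have hdki : ∀ x ∈ Us, ki + x 2 ≠ 0 := by
    intro x hx; have := hx2 x hx
    have h := min_le_left (min κ1 ki) k2; have h2 := min_le_right κ1 ki; nlinarith [this]
  have hdk2 : ∀ x ∈ Us, k2 + x 2 ≠ 0 := by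
    intro x hx; have := hx2 x hx
    have h := min_le_right (min κ1 ki) k2; nlinarith [this]
  have hd2 : ∀ x ∈ Us, κ2 + x 3 ≠ 0 := by
    intro x hx; have := hx3 x hx; have h := min_le_left κ2 k1; nlinarith [this]
  have hdk1 : ∀ x ∈ Us, k1 + x 3 ≠ 0 := by
    intro x hx; have := hx3 x hx; have h := min_le_right κ2 k1; nlinarith [this]
  have hd3 : ∀ x ∈ Us, κ3 + x 4 ≠ 0 := by
    intro x hx; have := hx4 x hx; have h := min_le_left κ3 lam; nlinarith [this]
  have hdlam : ∀ x ∈ Us, lam + x 4 ≠ 0 := by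
    intro x hx; have := hx4 x hx; have h := min_le_right κ3 lam; nlinarith [this]
  have hmu1 : ContDiffOn ℝ 1 (fun x : Fin 5 → ℝ => mu m1 κ1 lam (x 2) (x 4)) Us := by
    unfold mu
    exact (contDiffOn_const.mul ((hproj 2).div (contDiffOn_const.add (hproj 2)) hd1)).mul
      (contDiffOn_const.div (contDiffOn_const.add (hproj 4)) hdlam)
  have hmu2 : ContDiffOn ℝ 1 (fun x : Fin 5 → ℝ => mu m2 κ2 lam (x 3) (x 4)) Us := by
    unfold mu
    exact (contDiffOn_const.mul ((hproj 3).div (contDiffOn_const.add (hproj 3)) hd2)).mul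
      (contDiffOn_const.div (contDiffOn_const.add (hproj 4)) hdlam)
  have hmu3 : ContDiffOn ℝ 1 (fun x : Fin 5 → ℝ => mu3 m3 κ3 lam (x 4)) Us := by
    unfold mu3
    exact (contDiffOn_const.mul ((hproj 4).div (contDiffOn_const.add (hproj 4)) hd3)).mul
      (contDiffOn_const.div (contDiffOn_const.add (hproj 4)) hdlam)
  have heta1 : ContDiffOn ℝ 1 (fun x : Fin 5 → ℝ => eta1 e1 k1 ki (x 2) (x 3)) Us := by
    unfold eta1
    exact (contDiffOn_const.mul ((hproj 3).div (contDiffOn_const.add (hproj 3)) hdk1)).mul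
      (contDiffOn_const.div (contDiffOn_const.add (hproj 2)) hdki)
  have heta2 : ContDiffOn ℝ 1 (fun x : Fin 5 → ℝ => eta2 e2 k2 (x 2)) Us := by
    unfold eta2
    exact contDiffOn_const.mul ((hproj 2).div (contDiffOn_const.add (hproj 2)) hdk2)
  rw [contDiffOn_pi]
  intro i
  fin_cases i <;>
    simp only [F, bdiv, Fin.isValue, Matrix.cons_val_zero, Matrix.cons_val_one, Matrix.head_cons,
      Matrix.cons_val_two, Matrix.tail_cons, Matrix.cons_val_three, Matrix.cons_val_four,
      Matrix.head_fin_const, Fin.mk_one]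
  · exact (((hmu1.add hmu3).sub heta1).mul (hproj 0)).add (heta2.mul (hproj 1))
  · exact (((hmu2.add hmu3).sub heta2).mul (hproj 1)).add (heta1.mul (hproj 0))
  · exact ((hmu1.mul (hproj 0)).neg).div_const _
  · exact ((hmu2.mul (hproj 1)).neg).div_const _
  · exact (((hmu3.mul ((hproj 0).add (hproj 1))).neg).div_const (q3 * V)).add
      ((((contDiffOn_const.mul hmu1).mul (hproj 0)).add
        ((contDiffOn_const.mul hmu2).mul (hproj 1))).div_const V)

/-- Quasipositivity of `F` on the nonnegative orthant. -/
lemma F_quasipos (m1 m2 m3 κ1 κ2 κ3 lam e1 e2 k1 k2 ki q1 q2 q3 θ1 θ2 V : ℝ)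
    (hm1 : 0 < m1) (hm2 : 0 < m2) (hm3 : 0 < m3)
    (hκ1 : 0 < κ1) (hκ2 : 0 < κ2) (hκ3 : 0 < κ3) (hlam : 0 < lam)
    (he1 : 0 < e1) (he2 : 0 < e2) (hk1 : 0 < k1) (hk2 : 0 < k2) (hki : 0 < ki)
    (hθ1 : 0 < θ1) (hθ2 : 0 < θ2) (hV : 0 < V)
    (p : Fin 5 → ℝ) (hp : ∀ i, 0 ≤ p i) (j : Fin 5) (hpj : p j = 0) :
    0 ≤ F m1 m2 m3 κ1 κ2 κ3 lam e1 e2 k1 k2 ki q1 q2 q3 θ1 θ2 V p j := by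
  fin_cases j
  · have h0 : p 0 = 0 := hpj
    show 0 ≤ F m1 m2 m3 κ1 κ2 κ3 lam e1 e2 k1 k2 ki q1 q2 q3 θ1 θ2 V p 0
    simp only [F, bdiv, Matrix.cons_val_zero]
    rw [h0, mul_zero, zero_add]
    exact mul_nonneg (eta2_nonneg he2.le hk2 (hp 2)) (hp 1)
  · have h1 : p 1 = 0 := hpj
    show 0 ≤ F m1 m2 m3 κ1 κ2 κ3 lam e1 e2 k1 k2 ki q1 q2 q3 θ1 θ2 V p 1
    simp only [F, bdiv, Matrix.cons_val_one, Matrix.head_cons]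
    rw [h1, mul_zero, zero_add]
    exact mul_nonneg (eta1_nonneg he1.le hk1 hki (hp 2) (hp 3)) (hp 0)
  · have h2 : p 2 = 0 := hpj
    show 0 ≤ F m1 m2 m3 κ1 κ2 κ3 lam e1 e2 k1 k2 ki q1 q2 q3 θ1 θ2 V p 2
    simp only [F, Matrix.cons_val_two, Matrix.tail_cons, Matrix.head_cons]
    rw [h2, mu_zero, zero_mul, neg_zero, zero_div]
  · have h3 : p 3 = 0 := hpj
    show 0 ≤ F m1 m2 m3 κ1 κ2 κ3 lam e1 e2 k1 k2 ki q1 q2 q3 θ1 θ2 V p 3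
    simp only [F, Matrix.cons_val_three, Matrix.tail_cons, Matrix.head_cons]
    rw [h3, mu_zero, zero_mul, neg_zero, zero_div]
  · have h4 : p 4 = 0 := hpj
    show 0 ≤ F m1 m2 m3 κ1 κ2 κ3 lam e1 e2 k1 k2 ki q1 q2 q3 θ1 θ2 V p 4
    simp only [F, Matrix.cons_val_four, Matrix.tail_cons, Matrix.head_cons]
    rw [h4, mu3_zero, zero_mul, neg_zero, zero_div, zero_add]
    apply div_nonneg _ hV.le
    apply add_nonneg
    · exact mul_nonneg (mul_nonneg hθ1.le (mu_nonneg hm1.le hκ1 hlam (hp 2) le_rfl)) (hp 0)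
    · exact mul_nonneg (mul_nonneg hθ2.le (mu_nonneg hm2.le hκ2 hlam (hp 3) le_rfl)) (hp 1)

/-- global existence and uniqueness. For every initial condition
`x⁰ ∈ [0,∞)⁵` there exists a unique solution `x : [0,∞) → ℝ⁵` of `x' = F(x)` with
`x(0) = x⁰`, and it takes values in the compact set `{y ∈ [0,∞)⁵ : M(y) = M(x⁰)}`. -/
theorem diauxic_global_existence_uniqueness
    (m1 m2 m3 κ1 κ2 κ3 lam e1 e2 k1 k2 ki q1 q2 q3 θ1 θ2 V : ℝ)
    (hm1 : 0 < m1) (hm2 : 0 < m2) (hm3 : 0 < m3)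
    (hκ1 : 0 < κ1) (hκ2 : 0 < κ2) (hκ3 : 0 < κ3) (hlam : 0 < lam)
    (he1 : 0 < e1) (he2 : 0 < e2) (hk1 : 0 < k1) (hk2 : 0 < k2) (hki : 0 < ki)
    (hq1 : 0 < q1) (hq2 : 0 < q2) (hq3 : 0 < q3)
    (hθ1 : 0 < θ1) (hθ2 : 0 < θ2) (hV : 0 < V)
    (x0 : Fin 5 → ℝ) (hx0 : ∀ i, 0 ≤ x0 i) :
    IsCompact {y : Fin 5 → ℝ | (∀ i, 0 ≤ y i) ∧
        Mfun q1 q2 q3 θ1 θ2 V y = Mfun q1 q2 q3 θ1 θ2 V x0} ∧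
    ∃ x : ℝ → Fin 5 → ℝ,
      x 0 = x0 ∧
      (∀ t ∈ Ici (0 : ℝ),
        HasDerivWithinAt x (F m1 m2 m3 κ1 κ2 κ3 lam e1 e2 k1 k2 ki q1 q2 q3 θ1 θ2 V (x t))
          (Ici (0 : ℝ)) t) ∧
      (∀ t ∈ Ici (0 : ℝ), x t ∈ {y : Fin 5 → ℝ | (∀ i, 0 ≤ y i) ∧
        Mfun q1 q2 q3 θ1 θ2 V y = Mfun q1 q2 q3 θ1 θ2 V x0}) ∧
      (∀ y : ℝ → Fin 5 → ℝ, y 0 = x0 →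
        (∀ t ∈ Ici (0 : ℝ),
          HasDerivWithinAt y (F m1 m2 m3 κ1 κ2 κ3 lam e1 e2 k1 k2 ki q1 q2 q3 θ1 θ2 V (y t))
            (Ici (0 : ℝ)) t) →
        (∀ t ∈ Ici (0 : ℝ), ∀ i, 0 ≤ y t i) →
        ∀ t ∈ Ici (0 : ℝ), y t = x t) := by
  have hq1' : q1 ≠ 0 := ne_of_gt hq1
  have hq2' : q2 ≠ 0 := ne_of_gt hq2
  have hq3' : q3 ≠ 0 := ne_of_gt hq3
  have hV' : V ≠ 0 := ne_of_gt hV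
  have h13 : 0 < 1 + θ1 * q3 := by nlinarith
  have h23 : 0 < 1 + θ2 * q3 := by nlinarith
  have hc2p : 0 < V * (q1 * (1 + θ1 * q3)) := by positivity
  have hc3p : 0 < V * (q2 * (1 + θ2 * q3)) := by positivity
  have hc4p : 0 < V * q3 := by positivity
  have hMform : ∀ y : Fin 5 → ℝ, Mfun q1 q2 q3 θ1 θ2 V y
      = y 0 + y 1 + (V * (q1 * (1 + θ1 * q3))) * y 2 + (V * (q2 * (1 + θ2 * q3))) * y 3
        + (V * q3) * y 4 := by
    intro y; unfold Mfun; ring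
  set M0 := Mfun q1 q2 q3 θ1 θ2 V x0 with hM0def
  have hM0nn : 0 ≤ M0 := by
    rw [hM0def, hMform]
    have h0 := hx0 0; have h1 := hx0 1
    have t2 := mul_nonneg hc2p.le (hx0 2)
    have t3 := mul_nonneg hc3p.le (hx0 3)
    have t4 := mul_nonneg hc4p.le (hx0 4)
    linarith
  set B := 1 + M0 + M0 / (V * (q1 * (1 + θ1 * q3))) + M0 / (V * (q2 * (1 + θ2 * q3)))
    + M0 / (V * q3) with hBdef
  have hdv2 := div_nonneg hM0nn hc2p.le
  have hdv3 := div_nonneg hM0nn hc3p.le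
  have hdv4 := div_nonneg hM0nn hc4p.le
  have hBpos : 0 < B := by rw [hBdef]; linarith
  have hbound : ∀ y : Fin 5 → ℝ, (∀ i, 0 ≤ y i) → Mfun q1 q2 q3 θ1 θ2 V y = M0 →
      ∀ i, y i ≤ B := by
    intro y hy hM i
    rw [hMform] at hM
    have t2 := mul_nonneg hc2p.le (hy 2)
    have t3 := mul_nonneg hc3p.le (hy 3)
    have t4 := mul_nonneg hc4p.le (hy 4)
    have h0 := hy 0; have h1 := hy 1
    fin_cases i
    · show y 0 ≤ B
      rw [hBdef]; linarith
    · show y 1 ≤ B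
      rw [hBdef]; linarith
    · show y 2 ≤ B
      have h' : y 2 ≤ M0 / (V * (q1 * (1 + θ1 * q3))) :=
        (le_div_iff₀ hc2p).mpr (by nlinarith)
      rw [hBdef]; linarith
    · show y 3 ≤ B
      have h' : y 3 ≤ M0 / (V * (q2 * (1 + θ2 * q3))) :=
        (le_div_iff₀ hc3p).mpr (by nlinarith)
      rw [hBdef]; linarith
    · show y 4 ≤ B
      have h' : y 4 ≤ M0 / (V * q3) :=
        (le_div_iff₀ hc4p).mpr (by nlinarith)
      rw [hBdef]; linarith
  -- the clamp map onto the box `[0, B]⁵`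
  set cl : (Fin 5 → ℝ) → (Fin 5 → ℝ) := fun y i => max 0 (min (y i) B) with hcldef
  have hcl0 : ∀ y i, 0 ≤ cl y i := fun y i => le_max_left _ _
  have hclB : ∀ y i, cl y i ≤ B := fun y i => max_le hBpos.le (min_le_right _ _)
  have hclid : ∀ y : Fin 5 → ℝ, (∀ i, 0 ≤ y i) → (∀ i, y i ≤ B) → cl y = y := by
    intro y h1 h2; funext i
    show max 0 (min (y i) B) = y i
    rw [min_eq_left (h2 i), max_eq_right (h1 i)]
  have hcllip : LipschitzWith 1 cl := by
    apply LipschitzWith.of_dist_le_mul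
    intro y z
    rw [NNReal.coe_one, one_mul, dist_pi_le_iff dist_nonneg]
    intro i
    calc dist (cl y i) (cl z i) ≤ dist (y i) (z i) := by
          show dist (max 0 (min (y i) B)) (max 0 (min (z i) B)) ≤ _
          rw [Real.dist_eq, Real.dist_eq, max_comm 0 (min (y i) B), max_comm 0 (min (z i) B)]
          refine le_trans (abs_max_sub_max_le_abs _ _ _) ?_
          refine le_trans (abs_min_sub_min_le_max _ _ _ _) ?_
          rw [sub_self, abs_zero, max_eq_left (abs_nonneg _)]
      _ ≤ dist y z := dist_le_pi_dist y z i
  -- the compact box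
  have hQc : IsCompact (Icc (0 : Fin 5 → ℝ) (fun _ => B)) := isCompact_Icc
  have hQconv : Convex ℝ (Icc (0 : Fin 5 → ℝ) (fun _ => B)) := convex_Icc _ _
  have hQsubU : Icc (0 : Fin 5 → ℝ) (fun _ => B) ⊆ U κ1 κ2 κ3 lam k1 k2 ki := by
    intro y hy
    have h1 : ∀ i, (0:ℝ) ≤ y i := fun i => hy.1 i
    have hmin1 : 0 < min (min κ1 ki) k2 := lt_min (lt_min hκ1 hki) hk2
    have hmin2 : 0 < min κ2 k1 := lt_min hκ2 hk1
    have hmin3 : 0 < min κ3 lam := lt_min hκ3 hlam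
    exact ⟨by linarith [h1 2], by linarith [h1 3], by linarith [h1 4]⟩
  have hclQ : ∀ y, cl y ∈ Icc (0 : Fin 5 → ℝ) (fun _ => B) :=
    fun y => ⟨fun i => hcl0 y i, fun i => hclB y i⟩
  -- `F` is Lipschitz on the box
  have hcd := contDiffOn_F m1 m2 m3 κ1 κ2 κ3 lam e1 e2 k1 k2 ki q1 q2 q3 θ1 θ2 V
    hκ1 hκ2 hκ3 hlam hk1 hk2 hki
  have hUopen := isOpen_U κ1 κ2 κ3 lam k1 k2 ki
  obtain ⟨c, hc⟩ := hQc.exists_bound_of_continuousOn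
    ((hcd.continuousOn_fderiv_of_isOpen hUopen le_rfl).mono hQsubU)
  have hFlip : LipschitzOnWith ⟨max c 0, le_max_right c 0⟩
      (F m1 m2 m3 κ1 κ2 κ3 lam e1 e2 k1 k2 ki q1 q2 q3 θ1 θ2 V)
      (Icc (0 : Fin 5 → ℝ) (fun _ => B)) := by
    apply hQconv.lipschitzOnWith_of_nnnorm_fderiv_le (𝕜 := ℝ)
    · intro y hy
      exact (hcd.differentiableOn one_ne_zero).differentiableAt (hUopen.mem_nhds (hQsubU hy))
    · intro y hy
      exact NNReal.coe_le_coe.mp (le_trans (hc _ hy) (le_max_left c 0))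
  set G : (Fin 5 → ℝ) → (Fin 5 → ℝ) :=
    fun y => F m1 m2 m3 κ1 κ2 κ3 lam e1 e2 k1 k2 ki q1 q2 q3 θ1 θ2 V (cl y) with hGdef
  have hGlip : LipschitzWith ⟨max c 0, le_max_right c 0⟩ G := by
    apply LipschitzWith.of_dist_le_mul
    intro y z
    calc dist (G y) (G z) ≤ (max c 0) * dist (cl y) (cl z) :=
          hFlip.dist_le_mul _ (hclQ y) _ (hclQ z)
      _ ≤ (max c 0) * dist y z := by
          have h := hcllip.dist_le_mul y z
          rw [NNReal.coe_one, one_mul] at h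
          exact mul_le_mul_of_nonneg_left h (le_max_right c 0)
  obtain ⟨Cb, hCb⟩ := hQc.exists_bound_of_continuousOn (hcd.continuousOn.mono hQsubU)
  have hGbd : ∀ y, ‖G y‖ ≤ Cb := fun y => hCb _ (hclQ y)
  obtain ⟨x, hx0', hxder⟩ := global_exists hGlip hGbd x0
  -- componentwise derivatives
  have hcompG : ∀ t ∈ Ici (0:ℝ), ∀ j : Fin 5,
      HasDerivWithinAt (fun s => x s j) (G (x t) j) (Ici (0:ℝ)) t := by
    intro t ht j
    have h := (ContinuousLinearMap.proj (R := ℝ) (φ := fun _ : Fin 5 => ℝ)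
      j).hasFDerivAt.comp_hasDerivWithinAt t (hxder t ht)
    exact h
  -- nonnegativity is preserved
  have hxnn : ∀ j : Fin 5, ∀ t ∈ Ici (0:ℝ), 0 ≤ x t j := by
    intro j
    apply nonneg_of_rightDeriv (fun t => x t j) (fun t => G (x t) j)
      (fun t ht => hcompG t ht j)
    · rw [hx0']; exact hx0 j
    · intro t ht hle
      apply F_quasipos m1 m2 m3 κ1 κ2 κ3 lam e1 e2 k1 k2 ki q1 q2 q3 θ1 θ2 V
        hm1 hm2 hm3 hκ1 hκ2 hκ3 hlam he1 he2 hk1 hk2 hki hθ1 hθ2 hV (cl (x t)) (hcl0 _)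
      show max 0 (min (x t j) B) = 0
      rw [max_eq_left (le_trans (min_le_left _ _) hle)]
  -- conservation of M along any trajectory of F
  have hMconst : ∀ (z w : ℝ → Fin 5 → ℝ),
      (∀ t ∈ Ici (0:ℝ), HasDerivWithinAt z
        (F m1 m2 m3 κ1 κ2 κ3 lam e1 e2 k1 k2 ki q1 q2 q3 θ1 θ2 V (w t)) (Ici (0:ℝ)) t) →
      ∀ t ∈ Ici (0:ℝ), Mfun q1 q2 q3 θ1 θ2 V (z t) = Mfun q1 q2 q3 θ1 θ2 V (z 0) := by
    intro z w hz
    apply const_of_rightDeriv_zero _ (fun t =>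
      F m1 m2 m3 κ1 κ2 κ3 lam e1 e2 k1 k2 ki q1 q2 q3 θ1 θ2 V (w t) 0
      + F m1 m2 m3 κ1 κ2 κ3 lam e1 e2 k1 k2 ki q1 q2 q3 θ1 θ2 V (w t) 1
      + V * (q1 * (1 + θ1 * q3)
          * F m1 m2 m3 κ1 κ2 κ3 lam e1 e2 k1 k2 ki q1 q2 q3 θ1 θ2 V (w t) 2
        + q2 * (1 + θ2 * q3)
          * F m1 m2 m3 κ1 κ2 κ3 lam e1 e2 k1 k2 ki q1 q2 q3 θ1 θ2 V (w t) 3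
        + q3 * F m1 m2 m3 κ1 κ2 κ3 lam e1 e2 k1 k2 ki q1 q2 q3 θ1 θ2 V (w t) 4))
    · intro t ht
      have hc' : ∀ j : Fin 5, HasDerivWithinAt (fun s => z s j)
          (F m1 m2 m3 κ1 κ2 κ3 lam e1 e2 k1 k2 ki q1 q2 q3 θ1 θ2 V (w t) j) (Ici (0:ℝ)) t := by
        intro j
        have h := (ContinuousLinearMap.proj (R := ℝ) (φ := fun _ : Fin 5 => ℝ)
          j).hasFDerivAt.comp_hasDerivWithinAt t (hz t ht)
        exact h
      have hA := (hc' 0).add (hc' 1)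
      have hB := (HasDerivWithinAt.const_mul (q1 * (1 + θ1 * q3)) (hc' 2)).add
        (HasDerivWithinAt.const_mul (q2 * (1 + θ2 * q3)) (hc' 3))
      have hC := hB.add (HasDerivWithinAt.const_mul q3 (hc' 4))
      exact hA.add (HasDerivWithinAt.const_mul V hC)
    · intro t ht
      exact Mcomb m1 m2 m3 κ1 κ2 κ3 lam e1 e2 k1 k2 ki q1 q2 q3 θ1 θ2 V
        hq1' hq2' hq3' hV' (w t)
  have hxderF : ∀ t ∈ Ici (0:ℝ), HasDerivWithinAt x
      (F m1 m2 m3 κ1 κ2 κ3 lam e1 e2 k1 k2 ki q1 q2 q3 θ1 θ2 V (cl (x t))) (Ici (0:ℝ)) t :=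
    fun t ht => hxder t ht
  have hxM : ∀ t ∈ Ici (0:ℝ), Mfun q1 q2 q3 θ1 θ2 V (x t) = M0 := by
    intro t ht
    have h := hMconst x (fun s => cl (x s)) hxderF t ht
    rwa [hx0'] at h
  have hclx : ∀ t ∈ Ici (0:ℝ), cl (x t) = x t :=
    fun t ht => hclid _ (fun i => hxnn i t ht) (hbound _ (fun i => hxnn i t ht) (hxM t ht))
  have hxFder : ∀ t ∈ Ici (0:ℝ), HasDerivWithinAt x
      (F m1 m2 m3 κ1 κ2 κ3 lam e1 e2 k1 k2 ki q1 q2 q3 θ1 θ2 V (x t)) (Ici (0:ℝ)) t := by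
    intro t ht
    have h := hxderF t ht
    rwa [hclx t ht] at h
  refine ⟨?_, x, hx0', hxFder, fun t ht => ⟨fun i => hxnn i t ht, hxM t ht⟩, ?_⟩
  · -- compactness
    apply Metric.isCompact_of_isClosed_isBounded
    · have h1 : IsClosed {y : Fin 5 → ℝ | ∀ i, 0 ≤ y i} := by
        have he : {y : Fin 5 → ℝ | ∀ i, 0 ≤ y i} = ⋂ i, {y : Fin 5 → ℝ | 0 ≤ y i} := by
          ext y; simp
        rw [he]
        exact isClosed_iInter (fun i => isClosed_le continuous_const (continuous_apply i))
      have h2 : IsClosed {y : Fin 5 → ℝ | Mfun q1 q2 q3 θ1 θ2 V y = M0} := by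
        apply isClosed_eq _ continuous_const
        unfold Mfun
        fun_prop
      exact h1.inter h2
    · apply Bornology.IsBounded.subset hQc.isBounded
      intro y hy
      exact ⟨fun i => hy.1 i, fun i => hbound y hy.1 hy.2 i⟩
  · -- uniqueness
    intro y hy0 hyder hynn
    have hyM : ∀ t ∈ Ici (0:ℝ), Mfun q1 q2 q3 θ1 θ2 V (y t) = M0 := by
      intro t ht
      have h := hMconst y y hyder t ht
      rwa [hy0] at h
    have hcly : ∀ t ∈ Ici (0:ℝ), cl (y t) = y t :=
      fun t ht => hclid _ (hynn t ht) (hbound _ (hynn t ht) (hyM t ht))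
    have hyGder : ∀ t ∈ Ici (0:ℝ), HasDerivWithinAt y (G (y t)) (Ici (0:ℝ)) t := by
      intro t ht
      have h := hyder t ht
      rw [← hcly t ht] at h
      exact h
    exact fun t ht => uniq_on_Ici hGlip hyGder hxder (by rw [hy0, hx0']) t ht
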